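/- In the maximum principle conditions for the density-estimation optimal control problem, the problem is normal: if λ₀ ≥ 0, λ₂ : [0,1] → ℝ satisfies λ₀ u(t) = −λ₂(t) for a.e. t, λ̇₂(t) = −λ₀ β² (x₂(t) − w(t)) − γ e^{x₂(t)} a.e., and λ₀ = 0 implies λ₂ ≡ 0 and γ = 0 (so that (λ₀, λ₁, λ₂) = 0, which contradicts the nontriviality of multipliers), then λ₀ > 0. Concretely: if λ₀ = 0 and λ₀ u = −λ₂ a.e. with λ₂ continuous, then λ₂ ≡ 0 on [0,1]; and then λ̇₂ = −γ e^{x₂} ≡ 0 with e^{x₂} > 0 forces γ = 0. -/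
import Mathlib

open MeasureTheory Set

theorem normality_lemma
    (β γ lam₀ : ℝ) (x₂ w u lam₂ : ℝ → ℝ)
    (hx₂ : ContinuousOn x₂ (Icc (0:ℝ) 1))
    (hw : ContinuousOn w (Icc (0:ℝ) 1))
    (hlam₂ : ContinuousOn lam₂ (Icc (0:ℝ) 1))
    (hlam₀ : lam₀ = 0)
    (hctrl : ∀ᵐ t ∂(volume.restrict (Icc (0:ℝ) 1)), lam₀ * u t = -lam₂ t)
    (hadj : ∀ t ∈ Ioo (0:ℝ) 1,
      HasDerivAt lam₂ (-lam₀ * β ^ 2 * (x₂ t - w t) - γ * Real.exp (x₂ t)) t) :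
    (∀ t ∈ Icc (0:ℝ) 1, lam₂ t = 0) ∧ γ = 0 := by
  have hae : lam₂ =ᵐ[volume.restrict (Icc (0:ℝ) 1)] (fun _ => (0:ℝ)) := by
    filter_upwards [hctrl] with t ht
    have := ht
    rw [hlam₀, zero_mul] at this
    linarith
  have heq : EqOn lam₂ (fun _ => (0:ℝ)) (Icc (0:ℝ) 1) :=
    Measure.eqOn_Icc_of_ae_eq volume (by norm_num) hae hlam₂ continuousOn_const
  refine ⟨fun t ht => heq ht, ?_⟩
  have hmem : (1/2 : ℝ) ∈ Ioo (0:ℝ) 1 := by norm_num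
  have hd := hadj (1/2) hmem
  have hzero : HasDerivAt lam₂ 0 (1/2 : ℝ) := by
    have : HasDerivAt (fun _ : ℝ => (0:ℝ)) 0 (1/2 : ℝ) := hasDerivAt_const _ _
    refine this.congr_of_eventuallyEq ?_
    filter_upwards [isOpen_Ioo.mem_nhds hmem] with s hs
    exact heq (Ioo_subset_Icc_self hs)
  have huniq := hd.unique hzero
  rw [hlam₀] at huniq
  have hexp : Real.exp (x₂ (1/2)) > 0 := Real.exp_pos _
  have : γ * Real.exp (x₂ (1/2)) = 0 := by linarith [huniq]
  rcases mul_eq_zero.mp this with h | h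
  · exact h
  · exact absurd h (ne_of_gt hexp)
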